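/- arXiv:math/0610244 — 2 statements merged into one kernel-verified Lean document; each statement's English description precedes it below -/
import Mathlib

section
/- For α > 1, the kernel g_α(t) = t^(α-1)/Γ(α) is not completely positive on [0,T] for any T > 0. -/
open MeasureTheory intervalIntegral

noncomputable def gKer (α t : ℝ) : ℝ := t ^ (α - 1) / Real.Gamma α

def CompletelyPositiveOn (a : ℝ → ℝ) (T : ℝ) : Prop :=
  ∀ μ : ℝ, 0 ≤ μ →
    (∀ s : ℝ → ℝ, IntervalIntegrable s MeasureTheory.volume 0 T →
      (∀ t ∈ Set.Icc (0:ℝ) T, s t + μ * ∫ τ in (0:ℝ)..t, a (t - τ) * s τ = 1) →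
      ∀ t ∈ Set.Icc (0:ℝ) T, 0 ≤ s t) ∧
    (∀ r : ℝ → ℝ, IntervalIntegrable r MeasureTheory.volume 0 T →
      (∀ t ∈ Set.Icc (0:ℝ) T, r t + μ * ∫ τ in (0:ℝ)..t, a (t - τ) * r τ = a t) →
      ∀ t ∈ Set.Icc (0:ℝ) T, 0 ≤ r t)

/-! For `μ ≥ 0` the function `s(t) = E_α(-μ t^α)`, with `E_α` the Mittag-Leffler function,
solves `s + μ (g_α ⋆ s) = 1` (integrate the series termwise against `g_α` using the Beta
integral), so complete positivity would force `E_α(-x) ≥ 0` for every `x ≥ 0`. But then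
`s(t) = E_α(-t^α)` is nonnegative and at least `1/2` on some `[0, δ]`, whence
`1 ≥ (g_α ⋆ s)(t) ≥ (δ/2) g_α(t - δ)` for all `t ≥ δ`; this is absurd since for `α > 1` the
kernel `g_α` is unbounded. -/

open Real Set Filter Topology
open scoped Nat

noncomputable def mittagLeffler (α z : ℝ) : ℝ := ∑' n : ℕ, z ^ n / Gamma (α * n + 1)

section MittagLeffler

variable {α : ℝ}

lemma factorial_le_Gamma_mul_add_one (hα : 1 ≤ α) (n : ℕ) : (n ! : ℝ) ≤ Gamma (α * n + 1) := by
  rcases Nat.eq_zero_or_pos n with rfl | hn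
  · simp
  have h2 : (2 : ℝ) ≤ n + 1 := by
    have : (1 : ℝ) ≤ n := by exact_mod_cast hn
    linarith
  have hle : (n : ℝ) + 1 ≤ α * n + 1 := by nlinarith
  rw [← Gamma_nat_eq_factorial]
  exact Gamma_strictMonoOn_Ici.monotoneOn h2 (h2.trans hle) hle

lemma summable_mittagLeffler (hα : 1 ≤ α) (z : ℝ) :
    Summable fun n : ℕ => z ^ n / Gamma (α * n + 1) := by
  refine .of_norm_bounded (Real.summable_pow_div_factorial |z|) fun n => ?_
  rw [norm_div, norm_pow, norm_eq_abs, norm_eq_abs,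
    abs_of_pos (Gamma_pos_of_pos (by positivity))]
  gcongr
  exact factorial_le_Gamma_mul_add_one hα n

@[simp]
lemma mittagLeffler_zero (α : ℝ) : mittagLeffler α 0 = 1 := by
  rw [mittagLeffler, tsum_eq_single 0 fun n hn => by simp [zero_pow hn]]
  simp

lemma continuous_mittagLeffler (hα : 1 ≤ α) : Continuous (mittagLeffler α) := by
  refine continuous_iff_continuousAt.2 fun z => ?_
  set R := |z| + 1
  have hR : ContinuousOn (mittagLeffler α) (Icc (-R) R) := by
    refine continuousOn_tsum (fun n => (continuous_pow n).continuousOn.div_const _)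
      (summable_mittagLeffler hα R) fun n x hx => ?_
    rw [norm_div, norm_pow, norm_eq_abs, norm_eq_abs,
      abs_of_pos (Gamma_pos_of_pos (by positivity))]
    gcongr
    exact abs_le.2 hx
  exact hR.continuousAt (Icc_mem_nhds (by linarith [neg_abs_le z]) (by linarith [le_abs_self z]))

end MittagLeffler

lemma integral_rpow_mul_sub_rpow {a b t : ℝ} (ha : 0 < a) (hb : 0 < b) (ht : 0 < t) :
    ∫ τ in (0 : ℝ)..t, τ ^ (a - 1) * (t - τ) ^ (b - 1) =
      t ^ (a + b - 1) * (Gamma a * Gamma b / Gamma (a + b)) := by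
  apply Complex.ofReal_injective
  have hbeta := Complex.betaIntegral_scaled a b ht
  rw [Complex.betaIntegral_eq_Gamma_mul_div _ _ (by simpa) (by simpa)] at hbeta
  calc _ = ∫ x in (0 : ℝ)..t, (x : ℂ) ^ ((a : ℂ) - 1) * ((t : ℂ) - x) ^ ((b : ℂ) - 1) := by
        rw [← integral_ofReal]
        refine integral_congr fun x hx => ?_
        rw [uIcc_of_le ht.le] at hx
        push_cast [Complex.ofReal_cpow hx.1, Complex.ofReal_cpow (sub_nonneg.2 hx.2)]
        rfl
    _ = _ := by
        rw [hbeta, ← Complex.ofReal_add, Complex.Gamma_ofReal, Complex.Gamma_ofReal,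
          Complex.Gamma_ofReal]
        push_cast [Complex.ofReal_cpow ht.le]
        rfl

section Kernel

variable {α : ℝ}

lemma gKer_nonneg (hα : 0 < α) {t : ℝ} (ht : 0 ≤ t) : 0 ≤ gKer α t :=
  div_nonneg (rpow_nonneg ht _) (Gamma_pos_of_pos hα).le

lemma gKer_le_gKer (hα : 1 ≤ α) {s t : ℝ} (hs : 0 ≤ s) (hst : s ≤ t) : gKer α s ≤ gKer α t :=
  div_le_div_of_nonneg_right (rpow_le_rpow hs hst (by linarith)) (Gamma_pos_of_pos (by linarith)).le

lemma continuous_gKer (hα : 1 ≤ α) : Continuous (gKer α) :=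
  (continuous_rpow_const (by linarith)).div_const _

lemma tendsto_gKer_atTop (hα : 1 < α) : Tendsto (gKer α) atTop atTop :=
  (tendsto_rpow_atTop (by linarith)).atTop_div_const (Gamma_pos_of_pos (by linarith))

lemma integral_gKer_sub_mul_rpow (hα : 0 < α) {β t : ℝ} (hβ : -1 < β) (ht : 0 < t) :
    ∫ τ in (0 : ℝ)..t, gKer α (t - τ) * τ ^ β =
      Gamma (β + 1) / Gamma (α + β + 1) * t ^ (α + β) := by
  have hbeta := integral_rpow_mul_sub_rpow (by linarith : 0 < β + 1) hα ht
  rw [add_sub_cancel_right, show β + 1 + α - 1 = α + β by ring,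
    show β + 1 + α = α + β + 1 by ring] at hbeta
  have hker : ∀ τ, gKer α (t - τ) * τ ^ β = τ ^ β * (t - τ) ^ (α - 1) / Gamma α := fun τ => by
    rw [gKer]; ring
  simp_rw [hker, intervalIntegral.integral_div, hbeta]
  field_simp [(Gamma_pos_of_pos hα).ne']

end Kernel

section Volterra

variable {α : ℝ}

lemma integral_gKer_sub_mul_mittagLeffler_term (hα : 0 < α) (c : ℝ) {t : ℝ} (ht : 0 < t)
    (n : ℕ) :
    ∫ τ in (0 : ℝ)..t, gKer α (t - τ) * ((c * τ ^ α) ^ n / Gamma (α * n + 1)) =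
      c ^ n * t ^ (α * (n + 1)) / Gamma (α * (n + 1) + 1) := by
  have hΓ : Gamma (α * n + 1) ≠ 0 := (Gamma_pos_of_pos (by positivity)).ne'
  calc _ = c ^ n / Gamma (α * n + 1) * ∫ τ in (0 : ℝ)..t, gKer α (t - τ) * τ ^ (α * n) := by
        rw [← intervalIntegral.integral_const_mul]
        refine integral_congr fun τ hτ => ?_
        rw [uIcc_of_le ht.le] at hτ
        simp only [mul_pow, rpow_mul_natCast hτ.1]
        ring
    _ = _ := by
        rw [integral_gKer_sub_mul_rpow hα (by nlinarith [n.cast_nonneg (α := ℝ)]) ht,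
          show α + α * n = α * (n + 1) by ring]
        field_simp

lemma hasSum_integral_gKer_sub_mul_mittagLeffler (hα : 1 ≤ α) (c : ℝ) {t : ℝ} (ht : 0 < t) :
    HasSum (fun n : ℕ => c ^ n * t ^ (α * (n + 1)) / Gamma (α * (n + 1) + 1))
      (∫ τ in (0 : ℝ)..t, gKer α (t - τ) * mittagLeffler α (c * τ ^ α)) := by
  have hterm : ∀ n : ℕ, Continuous fun τ : ℝ => (c * τ ^ α) ^ n / Gamma (α * n + 1) := fun n =>
    ((continuous_const.mul (continuous_rpow_const (by linarith))).pow n).div_const _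
  have hker : Continuous fun τ => gKer α (t - τ) :=
    (continuous_gKer hα).comp (continuous_const.sub continuous_id)
  have hbound : ∀ (n : ℕ), ∀ τ ∈ uIoc (0 : ℝ) t,
      ‖gKer α (t - τ) * ((c * τ ^ α) ^ n / Gamma (α * n + 1))‖ ≤
        gKer α t * ((|c| * t ^ α) ^ n / Gamma (α * n + 1)) := by
    intro n τ hτ
    rw [uIoc_of_le ht.le] at hτ
    have hΓ : 0 < Gamma (α * n + 1) := Gamma_pos_of_pos (by positivity)
    have hτα : 0 ≤ τ ^ α := rpow_nonneg hτ.1.le α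
    rw [norm_mul, norm_div, norm_pow, norm_mul, norm_of_nonneg hΓ.le, norm_of_nonneg hτα,
      norm_of_nonneg (gKer_nonneg (by linarith) (by linarith [hτ.2])), norm_eq_abs]
    refine mul_le_mul (gKer_le_gKer hα (by linarith [hτ.2]) (by linarith [hτ.1])) ?_
      (by positivity) (gKer_nonneg (by linarith) ht.le)
    gcongr
    exacts [hτ.1.le, hτ.2]
  have hdom := intervalIntegral.hasSum_integral_of_dominated_convergence
    (F := fun (n : ℕ) τ => gKer α (t - τ) * ((c * τ ^ α) ^ n / Gamma (α * n + 1)))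
    (f := fun τ => gKer α (t - τ) * mittagLeffler α (c * τ ^ α))
    (μ := volume) (a := 0) (b := t)
    (fun n _ => gKer α t * ((|c| * t ^ α) ^ n / Gamma (α * n + 1)))
    (fun n => (hker.mul (hterm n)).aestronglyMeasurable)
    (fun n => ae_of_all _ (hbound n))
    (ae_of_all _ fun _ _ => (summable_mittagLeffler hα _).mul_left _)
    intervalIntegrable_const
    (ae_of_all _ fun τ _ => (summable_mittagLeffler hα _).hasSum.mul_left _)
  simpa only [integral_gKer_sub_mul_mittagLeffler_term (zero_lt_one.trans_le hα) c ht] using hdom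

theorem mittagLeffler_mul_rpow_eq_one_add_integral (hα : 1 ≤ α) (c : ℝ) {t : ℝ} (ht : 0 ≤ t) :
    mittagLeffler α (c * t ^ α) =
      1 + c * ∫ τ in (0 : ℝ)..t, gKer α (t - τ) * mittagLeffler α (c * τ ^ α) := by
  rcases ht.eq_or_lt with rfl | ht
  · simp [zero_rpow (by linarith : α ≠ 0)]
  rw [mittagLeffler, (summable_mittagLeffler hα _).tsum_eq_zero_add,
    ← ((hasSum_integral_gKer_sub_mul_mittagLeffler hα c ht).mul_left c).tsum_eq]
  congr 1
  · simp
  · congr 1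
    funext n
    rw [mul_pow, ← rpow_mul_natCast ht.le]
    push_cast
    ring

end Volterra

lemma mittagLeffler_neg_nonneg_of_completelyPositiveOn {α T : ℝ} (hα : 1 ≤ α) (hT : 0 < T)
    (hCP : CompletelyPositiveOn (gKer α) T) {x : ℝ} (hx : 0 ≤ x) : 0 ≤ mittagLeffler α (-x) := by
  set μ := x / T ^ α
  have hTα : 0 < T ^ α := rpow_pos_of_pos hT α
  have hs : Continuous fun t => mittagLeffler α (-μ * t ^ α) :=
    (continuous_mittagLeffler hα).comp
      (continuous_const.mul (continuous_rpow_const (by linarith)))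
  have hsol := (hCP μ (by positivity)).1 _ (hs.intervalIntegrable 0 T) fun t ht => by
    rw [mittagLeffler_mul_rpow_eq_one_add_integral hα (-μ) ht.1]
    ring
  simpa [μ, hTα.ne'] using hsol T ⟨hT.le, le_rfl⟩

lemma mul_gKer_sub_le_integral_gKer_sub_mul {α : ℝ} (hα : 1 ≤ α) {f : ℝ → ℝ} (hf : Continuous f)
    {m δ t : ℝ} (hm : 0 ≤ m) (hδ : 0 ≤ δ) (hδt : δ ≤ t) (hfm : ∀ τ ∈ Icc 0 δ, m ≤ f τ)
    (hf0 : ∀ τ ∈ Icc δ t, 0 ≤ f τ) :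
    δ * (gKer α (t - δ) * m) ≤ ∫ τ in (0 : ℝ)..t, gKer α (t - τ) * f τ := by
  have hint : ∀ a b, IntervalIntegrable (fun τ => gKer α (t - τ) * f τ) volume a b := fun a b =>
    (((continuous_gKer hα).comp (continuous_const.sub continuous_id)).mul hf).intervalIntegrable a b
  have hhead : δ * (gKer α (t - δ) * m) ≤ ∫ τ in (0 : ℝ)..δ, gKer α (t - τ) * f τ := by
    have := integral_mono_on (f := fun _ => gKer α (t - δ) * m) hδ intervalIntegrable_const
      (hint 0 δ) fun τ hτ =>
      mul_le_mul (gKer_le_gKer hα (by linarith) (by linarith [hτ.2])) (hfm τ hτ) hm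
        (gKer_nonneg (by linarith) (by linarith [hτ.2]))
    rwa [intervalIntegral.integral_const, smul_eq_mul, sub_zero] at this
  have htail : 0 ≤ ∫ τ in δ..t, gKer α (t - τ) * f τ :=
    integral_nonneg hδt fun τ hτ => mul_nonneg (gKer_nonneg (by linarith) (by linarith [hτ.2]))
      (hf0 τ hτ)
  rw [← integral_add_adjacent_intervals (hint 0 δ) (hint δ t)]
  linarith

theorem exists_mittagLeffler_neg_lt_zero {α : ℝ} (hα : 1 < α) :
    ∃ x, 0 ≤ x ∧ mittagLeffler α (-x) < 0 := by
  by_contra! hE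
  set s : ℝ → ℝ := fun τ => mittagLeffler α (-1 * τ ^ α)
  have hs : Continuous s := (continuous_mittagLeffler hα.le).comp
    (continuous_const.mul (continuous_rpow_const (by linarith)))
  have hs0 : ∀ τ, 0 ≤ τ → 0 ≤ s τ := fun τ hτ => by
    simpa [s] using hE (τ ^ α) (rpow_nonneg hτ α)
  obtain ⟨δ, hδ, hδs⟩ : ∃ δ > 0, ∀ τ ∈ Icc 0 δ, 1 / 2 ≤ s τ := by
    have hnear : ∀ᶠ τ in 𝓝 0, 1 / 2 < s τ :=
      continuousAt_const.eventually_lt hs.continuousAt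
        (by norm_num [s, zero_rpow (by linarith : α ≠ 0)])
    obtain ⟨ε, hε, hball⟩ := Metric.eventually_nhds_iff.1 hnear
    refine ⟨ε / 2, by positivity, fun τ hτ => (hball ?_).le⟩
    rw [Real.dist_eq, sub_zero, abs_of_nonneg hτ.1]
    linarith [hτ.2]
  have hbound : ∀ t, δ ≤ t → δ * (gKer α (t - δ) * (1 / 2)) ≤ 1 := fun t ht => by
    have hvol := mittagLeffler_mul_rpow_eq_one_add_integral hα.le (-1) (hδ.le.trans ht)
    have hlow := mul_gKer_sub_le_integral_gKer_sub_mul hα.le hs (by norm_num) hδ.le ht hδs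
      fun τ hτ => hs0 τ (hδ.le.trans hτ.1)
    linarith [hs0 t (hδ.le.trans ht)]
  obtain ⟨u, hu⟩ := ((tendsto_gKer_atTop hα).eventually_gt_atTop (2 / δ)).exists_forall_of_atTop
  have hlarge := hbound (max u 0 + δ) (by linarith [le_max_right u 0])
  rw [add_sub_cancel_right] at hlarge
  have hgKer := hu (max u 0) (le_max_left u 0)
  rw [div_lt_iff₀ hδ] at hgKer
  linarith

/-- For `α > 1` the kernel `g_α` is not completely positive on `[0,T]` for any `T > 0`. -/
theorem gKer_not_completelyPositive (α T : ℝ) (hα : 1 < α) (hT : 0 < T) :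
    ¬ CompletelyPositiveOn (gKer α) T := fun hCP => by
  obtain ⟨x, hx, hneg⟩ := exists_mittagLeffler_neg_lt_zero hα
  exact hneg.not_ge (mittagLeffler_neg_nonneg_of_completelyPositiveOn hα.le hT hCP hx)
end

section
/- If A is a bounded linear operator on a Banach space and a(t) = t^(α-1)/Γ(α) with α > 0, then the series S_α(t) = Σ_{n=0}^∞ A^n t^(αn)/Γ(αn + 1) converges in operator norm for each t ≥ 0 and defines an α-times resolvent family for A: it is strongly (indeed norm) continuous, S_α(0) = I, commutes with A, and satisfies S_α(t)x = x + ∫₀ᵗ g_α(t-τ) A S_α(τ)x dτ for all x. -/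
/-!
`Γ(αn + 1)` outgrows every geometric sequence (the Gamma integral over `[K, K + 1]`
already gives `Γ(s) ≥ e^{-(K+1)} K^{s-1}`), so the Mittag-Leffler series converges absolutely
in operator norm, uniformly for `t` in compact sets, which gives continuity; `A` commutes with
every term.
Term by term, the resolvent equation is the Beta-integral identity
`∫₀ᵗ g_α(t - τ) τ^{αn}/Γ(αn + 1) dτ = t^{α(n+1)}/Γ(α(n + 1) + 1)`, and sum and integral may be
interchanged because the integrated series still converges absolutely.
-/

open MeasureTheory intervalIntegral

noncomputable def opML {B : Type*} [NormedAddCommGroup B] [NormedSpace ℝ B]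
    [CompleteSpace B] (A : B →L[ℝ] B) (α t : ℝ) : B →L[ℝ] B :=
  ∑' n : ℕ, (t ^ (α * n) / Real.Gamma (α * n + 1)) • A ^ n

open Set

theorem Real.exp_neg_mul_rpow_le_Gamma {s K : ℝ} (hs : 1 ≤ s) (hK : 0 < K) :
    Real.exp (-(K + 1)) * K ^ (s - 1) ≤ Real.Gamma s := by
  set f := fun x : ℝ => Real.exp (-x) * x ^ (s - 1)
  have hf : IntegrableOn f (Ioi 0) := Real.GammaIntegral_convergent (by linarith)
  have hf_K : IntervalIntegrable f volume K (K + 1) :=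
    (intervalIntegrable_iff_integrableOn_Ioc_of_le (by linarith)).2 <|
      hf.mono_set fun x hx => hK.trans hx.1
  calc Real.exp (-(K + 1)) * K ^ (s - 1)
        = ∫ _ in K..K + 1, Real.exp (-(K + 1)) * K ^ (s - 1) := by simp
    _ ≤ ∫ x in K..K + 1, f x := by
        refine integral_mono_on (by linarith) intervalIntegrable_const hf_K fun x hx => ?_
        exact mul_le_mul (Real.exp_le_exp.2 (by linarith [hx.2]))
          (Real.rpow_le_rpow hK.le hx.1 (by linarith)) (by positivity) (by positivity)
    _ = ∫ x in Ioc K (K + 1), f x := integral_of_le (by linarith)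
    _ ≤ ∫ x in Ioi 0, f x := by
        refine setIntegral_mono_set hf ?_ (LE.le.eventuallyLE fun x hx => hK.trans hx.1)
        filter_upwards [self_mem_ae_restrict measurableSet_Ioi] with x hx
        exact mul_nonneg (Real.exp_pos _).le (Real.rpow_nonneg (le_of_lt hx) _)
    _ = Real.Gamma s := (Real.Gamma_eq_integral (by linarith)).symm

theorem summable_pow_div_Gamma_mul_add_one {α : ℝ} (hα : 0 < α) {c : ℝ} (hc : 0 ≤ c) :
    Summable fun n : ℕ => c ^ n / Real.Gamma (α * n + 1) := by
  set K : ℝ := (2 * c + 1) ^ α⁻¹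
  have hK : 0 < K := by positivity
  have hKα : K ^ α = 2 * c + 1 := Real.rpow_inv_rpow (by positivity) hα.ne'
  have hr : c / K ^ α < 1 := by rw [hKα, div_lt_one (by positivity)]; linarith
  refine Summable.of_nonneg_of_le (fun n => ?_) (fun n => ?_)
    ((summable_geometric_of_lt_one (by positivity) hr).mul_left (Real.exp (K + 1)))
  · have := Real.Gamma_pos_of_pos (show 0 < α * n + 1 by positivity)
    positivity
  · have hΓ := Real.exp_neg_mul_rpow_le_Gamma (s := α * n + 1) (by simp; positivity) hK
    rw [add_sub_cancel_right, Real.rpow_mul hK.le, Real.rpow_natCast] at hΓ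
    calc c ^ n / Real.Gamma (α * n + 1) ≤ c ^ n / (Real.exp (-(K + 1)) * (K ^ α) ^ n) :=
          div_le_div_of_nonneg_left (by positivity) (by positivity) hΓ
      _ = Real.exp (K + 1) * (c / K ^ α) ^ n := by
          rw [Real.exp_neg, div_pow]; field_simp

theorem integral_sub_rpow_mul_rpow {a b t : ℝ} (ha : 0 < a) (hb : 0 < b) (ht : 0 < t) :
    ∫ τ in 0..t, (t - τ) ^ (a - 1) * τ ^ (b - 1) =
      Real.Gamma a * Real.Gamma b / Real.Gamma (a + b) * t ^ (a + b - 1) := by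
  have hβ := Complex.betaIntegral_scaled (b : ℂ) (a : ℂ) ht
  rw [Complex.betaIntegral_eq_Gamma_mul_div _ _ (by simpa) (by simpa)] at hβ
  apply Complex.ofReal_injective
  rw [← intervalIntegral.integral_ofReal, integral_congr fun τ hτ => ?_]
  · rw [hβ]
    push_cast
    rw [Complex.ofReal_cpow ht.le, ← Complex.Gamma_ofReal, ← Complex.Gamma_ofReal,
      ← Complex.Gamma_ofReal]
    push_cast
    ring_nf
  · rw [uIcc_of_le ht.le] at hτ
    push_cast
    rw [Complex.ofReal_cpow (sub_nonneg.2 hτ.2), Complex.ofReal_cpow hτ.1, mul_comm]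
    push_cast
    rfl

theorem ContinuousLinearMap.norm_pow_le_pow_norm {𝕜 E : Type*} [NontriviallyNormedField 𝕜]
    [NormedAddCommGroup E] [NormedSpace 𝕜 E] (A : E →L[𝕜] E) (n : ℕ) : ‖A ^ n‖ ≤ ‖A‖ ^ n := by
  rcases n with _ | n
  · rw [pow_zero, pow_zero]
    exact ContinuousLinearMap.norm_id_le
  · exact norm_pow_le' A n.succ_pos

noncomputable def mlCoeff (α t : ℝ) (n : ℕ) : ℝ :=
  t ^ (α * n) / Real.Gamma (α * n + 1)

section mlCoeff

variable {α t : ℝ}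

@[simp]
theorem mlCoeff_zero_right (α t : ℝ) : mlCoeff α t 0 = 1 := by
  simp [mlCoeff]

theorem mlCoeff_zero_left (hα : 0 < α) {n : ℕ} (hn : n ≠ 0) : mlCoeff α 0 n = 0 := by
  rw [mlCoeff, Real.zero_rpow (by positivity), zero_div]

theorem mlCoeff_nonneg (hα : 0 ≤ α) (ht : 0 ≤ t) (n : ℕ) : 0 ≤ mlCoeff α t n :=
  div_nonneg (Real.rpow_nonneg ht _) (Real.Gamma_pos_of_pos (by positivity)).le

theorem mlCoeff_le_mlCoeff (hα : 0 ≤ α) {T : ℝ} (ht : 0 ≤ t) (htT : t ≤ T) (n : ℕ) :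
    mlCoeff α t n ≤ mlCoeff α T n := by
  have := Real.Gamma_pos_of_pos (show 0 < α * n + 1 by positivity)
  unfold mlCoeff
  gcongr

theorem mlCoeff_mul_pow (ht : 0 ≤ t) (c : ℝ) (n : ℕ) :
    mlCoeff α t n * c ^ n = (t ^ α * c) ^ n / Real.Gamma (α * n + 1) := by
  rw [mlCoeff, Real.rpow_mul ht, Real.rpow_natCast, mul_pow, div_mul_eq_mul_div]

theorem summable_mlCoeff_mul_pow (hα : 0 < α) (ht : 0 ≤ t) {c : ℝ} (hc : 0 ≤ c) :
    Summable fun n => mlCoeff α t n * c ^ n := by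
  simpa only [mlCoeff_mul_pow ht] using summable_pow_div_Gamma_mul_add_one hα (by positivity)

theorem continuous_mlCoeff (hα : 0 ≤ α) (n : ℕ) : Continuous fun t => mlCoeff α t n :=
  (Real.continuous_rpow_const (by positivity)).div_const _

theorem intervalIntegrable_kernel_mul_mlCoeff (hα : 0 < α) (t : ℝ) (n : ℕ) :
    IntervalIntegrable (fun τ => (t - τ) ^ (α - 1) / Real.Gamma α * mlCoeff α τ n)
      volume 0 t := by
  have hkernel :=
    (intervalIntegrable_rpow' (by linarith : -1 < α - 1) (a := t) (b := 0)).comp_sub_left t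
  rw [sub_self, sub_zero] at hkernel
  exact (hkernel.div_const _).mul_continuousOn (continuous_mlCoeff hα.le n).continuousOn

theorem integral_kernel_mul_mlCoeff (hα : 0 < α) (ht : 0 ≤ t) (n : ℕ) :
    ∫ τ in 0..t, (t - τ) ^ (α - 1) / Real.Gamma α * mlCoeff α τ n = mlCoeff α t (n + 1) := by
  rcases ht.eq_or_lt with rfl | ht
  · rw [integral_same, mlCoeff_zero_left hα n.succ_ne_zero]
  have hβ := integral_sub_rpow_mul_rpow hα (show 0 < α * n + 1 by positivity) ht
  rw [add_sub_cancel_right] at hβ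
  simp_rw [mlCoeff, div_mul_div_comm, intervalIntegral.integral_div, hβ]
  rw [show α + (α * n + 1) - 1 = α * ((n + 1 : ℕ) : ℝ) by push_cast; ring,
    show α + (α * n + 1) = α * ((n + 1 : ℕ) : ℝ) + 1 by push_cast; ring]
  have := Real.Gamma_pos_of_pos hα
  have := Real.Gamma_pos_of_pos (show 0 < α * n + 1 by positivity)
  field_simp

theorem integral_kernel_smul_tsum_mlCoeff {E : Type*} [NormedAddCommGroup E]
    [NormedSpace ℝ E] [CompleteSpace E] (hα : 0 < α) (ht : 0 ≤ t) (v : ℕ → E)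
    (hv : Summable fun n => mlCoeff α t (n + 1) * ‖v n‖) :
    ∫ τ in 0..t, ((t - τ) ^ (α - 1) / Real.Gamma α) • ∑' n, mlCoeff α τ n • v n =
      ∑' n, mlCoeff α t (n + 1) • v n := by
  set k : ℕ → ℝ → ℝ := fun n τ => (t - τ) ^ (α - 1) / Real.Gamma α * mlCoeff α τ n
  have hk_int (n : ℕ) : IntegrableOn (k n) (Ioc 0 t) :=
    (intervalIntegrable_kernel_mul_mlCoeff hα t n).1
  have hk_eq (n : ℕ) : ∫ τ in Ioc 0 t, k n τ = mlCoeff α t (n + 1) := by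
    rw [← integral_of_le ht, integral_kernel_mul_mlCoeff hα ht]
  have hk_norm (n : ℕ) :
      ∫ τ in Ioc 0 t, ‖k n τ • v n‖ = mlCoeff α t (n + 1) * ‖v n‖ := by
    rw [← hk_eq, ← MeasureTheory.integral_mul_const]
    refine setIntegral_congr_fun measurableSet_Ioc fun τ hτ => ?_
    have := Real.Gamma_pos_of_pos hα
    have := mlCoeff_nonneg hα.le hτ.1.le n
    have := Real.rpow_nonneg (sub_nonneg.2 hτ.2) (α - 1)
    rw [norm_smul, Real.norm_of_nonneg (by positivity)]
  simp_rw [integral_of_le ht, ← tsum_const_smul'', smul_smul]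
  rw [← integral_tsum_of_summable_integral_norm (F := fun n τ => k n τ • v n)
    (fun n => (hk_int n).smul_const (v n)) (by simpa only [hk_norm] using hv)]
  simp_rw [_root_.integral_smul_const, hk_eq]

theorem summable_norm_mlCoeff_smul_pow {E : Type*} [NormedAddCommGroup E] [NormedSpace ℝ E]
    (hα : 0 < α) (ht : 0 ≤ t) (A : E →L[ℝ] E) :
    Summable fun n => ‖mlCoeff α t n • A ^ n‖ := by
  refine (summable_mlCoeff_mul_pow hα ht (norm_nonneg A)).of_nonneg_of_le
    (fun _ => norm_nonneg _) fun n => ?_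
  rw [norm_smul, Real.norm_of_nonneg (mlCoeff_nonneg hα.le ht n)]
  gcongr
  · exact mlCoeff_nonneg hα.le ht n
  · exact A.norm_pow_le_pow_norm n

end mlCoeff

section opML

variable {B : Type*} [NormedAddCommGroup B] [NormedSpace ℝ B] [CompleteSpace B] {α t : ℝ}

theorem opML_eq_tsum (A : B →L[ℝ] B) (α t : ℝ) :
    opML A α t = ∑' n, mlCoeff α t n • A ^ n :=
  rfl

theorem hasSum_opML (hα : 0 < α) (ht : 0 ≤ t) (A : B →L[ℝ] B) :
    HasSum (fun n => mlCoeff α t n • A ^ n) (opML A α t) :=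
  (summable_norm_mlCoeff_smul_pow hα ht A).of_norm.hasSum

theorem hasSum_opML_apply (hα : 0 < α) (ht : 0 ≤ t) (A : B →L[ℝ] B) (x : B) :
    HasSum (fun n => mlCoeff α t n • (A ^ n) x) (opML A α t x) :=
  (hasSum_opML hα ht A).mapL (ContinuousLinearMap.apply ℝ B x)

theorem opML_zero (hα : 0 < α) (A : B →L[ℝ] B) : opML A α 0 = 1 := by
  rw [opML_eq_tsum, tsum_eq_single 0 fun n hn => by rw [mlCoeff_zero_left hα hn, zero_smul]]
  simp

theorem continuousOn_opML (hα : 0 < α) (A : B →L[ℝ] B) :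
    ContinuousOn (fun t => opML A α t) (Ici 0) := by
  have hIcc (T : ℝ) (hT : 0 ≤ T) : ContinuousOn (fun t => opML A α t) (Icc 0 T) := by
    simp only [opML_eq_tsum]
    refine continuousOn_tsum
      (fun n => ((continuous_mlCoeff hα.le n).smul continuous_const).continuousOn)
      (summable_norm_mlCoeff_smul_pow hα hT A) fun n t ht => ?_
    rw [norm_smul, norm_smul, Real.norm_of_nonneg (mlCoeff_nonneg hα.le ht.1 n),
      Real.norm_of_nonneg (mlCoeff_nonneg hα.le hT n)]
    gcongr
    exact mlCoeff_le_mlCoeff hα.le ht.1 ht.2 n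
  refine continuousOn_of_locally_continuousOn fun t ht =>
    ⟨Iio (t + 1), isOpen_Iio, lt_add_one t,
      (hIcc (t + 1) (by linarith [mem_Ici.1 ht])).mono fun s hs => ⟨hs.1, hs.2.le⟩⟩

theorem commute_opML (A : B →L[ℝ] B) (α t : ℝ) : Commute A (opML A α t) :=
  Commute.tsum_right A fun n => ((Commute.refl A).pow_right n).smul_right _

theorem opML_apply_eq_add_integral (hα : 0 < α) (ht : 0 ≤ t) (A : B →L[ℝ] B) (x : B) :
    opML A α t x =
      x + ∫ τ in 0..t, ((t - τ) ^ (α - 1) / Real.Gamma α) • A (opML A α τ x) := by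
  have hAS : EqOn (fun τ => ((t - τ) ^ (α - 1) / Real.Gamma α) • A (opML A α τ x))
      (fun τ => ((t - τ) ^ (α - 1) / Real.Gamma α) • ∑' n, mlCoeff α τ n • (A ^ (n + 1)) x)
      (uIcc 0 t) := fun τ hτ => by
    rw [uIcc_of_le ht] at hτ
    simp_rw [← ((hasSum_opML_apply hα hτ.1 A x).mapL A).tsum_eq, map_smul, pow_succ']
    rfl
  have hsum : Summable fun n => mlCoeff α t n * ‖(A ^ n) x‖ :=
    ((summable_mlCoeff_mul_pow hα ht (norm_nonneg A)).mul_right ‖x‖).of_nonneg_of_le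
      (fun n => mul_nonneg (mlCoeff_nonneg hα.le ht n) (norm_nonneg _)) fun n => by
        rw [mul_assoc]
        gcongr
        · exact mlCoeff_nonneg hα.le ht n
        · exact (A ^ n).le_of_opNorm_le (A.norm_pow_le_pow_norm n) x
  rw [integral_congr hAS,
    integral_kernel_smul_tsum_mlCoeff hα ht (fun n => (A ^ (n + 1)) x)
      ((summable_nat_add_iff 1).2 hsum),
    ← (hasSum_opML_apply hα ht A x).tsum_eq,
    (hasSum_opML_apply hα ht A x).summable.tsum_eq_zero_add,
    mlCoeff_zero_right, one_smul, pow_zero, one_apply_eq_self]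

end opML

/-- For a bounded operator `A` and `α > 0`, the series `Σ Aⁿ t^{αn}/Γ(αn+1)` converges in
operator norm for each `t ≥ 0` and defines an `α`-times resolvent family for `A`: it is
norm continuous, equals `I` at `t = 0`, commutes with `A`, and satisfies the resolvent
equation with kernel `g_α(t) = t^{α-1}/Γ(α)`. -/
theorem opML_is_alpha_resolvent
    {B : Type*} [NormedAddCommGroup B] [NormedSpace ℝ B] [CompleteSpace B]
    (A : B →L[ℝ] B) (α : ℝ) (hα : 0 < α) :
    (∀ t : ℝ, 0 ≤ t →
        Summable fun n : ℕ => ‖(t ^ (α * n) / Real.Gamma (α * n + 1)) • A ^ n‖) ∧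
      ContinuousOn (fun t => opML A α t) (Set.Ici 0) ∧
      opML A α 0 = 1 ∧
      (∀ t : ℝ, 0 ≤ t → A.comp (opML A α t) = (opML A α t).comp A) ∧
      (∀ t : ℝ, 0 ≤ t → ∀ x : B,
        opML A α t x = x + ∫ τ in (0:ℝ)..t,
          ((t - τ) ^ (α - 1) / Real.Gamma α) • A (opML A α τ x)) :=
  ⟨fun _ ht => summable_norm_mlCoeff_smul_pow hα ht A, continuousOn_opML hα A, opML_zero hα A,
    fun t _ => (commute_opML A α t).eq, fun _ ht => opML_apply_eq_add_integral hα ht A⟩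
end
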